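/- Let s, t ≥ 1 be natural numbers. For every w ∈ Row(s,t), applying the complement operation twice returns the original class: (⟨w⟩^c)^c = ⟨w⟩. -/

import Mathlib

/-!
A vector with a nonzero entry is recovered, up to rotation, from its pair sequence: the blocks
`a, 0, …, 0` (with `b - 1` zeros) of the pairs `(a, b)`, concatenated, give the vector rotated to
start at its first nonzero entry, and rotating the pair sequence only rotates this concatenation.
On pair sequences, complementing commutes with rotation and complementing twice is a rotation by
one step. Hence the pair sequence of `u` is a rotation of that of `w`, so `u` is a rotation of `w`;
if `w` is zero, so is `u`, and the two have the same length.
-/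

/-- The list of positions of the nonzero entries of `w`. -/
def nzPos (w : List ℕ) : List ℕ :=
  (List.range w.length).filter (fun i => w.getD i 0 ≠ 0)

/-- The pair sequence of `w`: each nonzero entry of `w` together with the cyclic
distance from its position to the next nonzero position. -/
def pairsOf (w : List ℕ) : List (ℕ × ℕ) :=
  (List.range (nzPos w).length).map (fun j =>
    (w.getD ((nzPos w).getD j 0) 0,
     if j + 1 = (nzPos w).length then (nzPos w).getD 0 0 + w.length - (nzPos w).getD j 0
     else (nzPos w).getD (j + 1) 0 - (nzPos w).getD j 0))

/-- The complemented pair sequence: `((a₀,b₀),...,(a_k,b_k)) ↦ ((b₀,a₁),(b₁,a₂),...,(b_k,a₀))`. -/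
def complPairs (p : List (ℕ × ℕ)) : List (ℕ × ℕ) :=
  (p.map Prod.snd).zip ((p.map Prod.fst).rotate 1)

/-- `v` is a complement of `w`: `v ∈ Row(t,s)` (where `w ∈ Row(s,t)`) and the pair sequence
of `v` is a cyclic permutation of the complemented pair sequence of `w`. -/
def IsComplementOf (w v : List ℕ) : Prop :=
  v.length = w.sum ∧ v.sum = w.length ∧ pairsOf v ~r complPairs (pairsOf w)

lemma nzPos_append (u w : List ℕ) :
    nzPos (u ++ w) = nzPos u ++ (nzPos w).map (· + u.length) := by
  unfold nzPos
  rw [List.length_append, List.range_add, List.filter_append, List.filter_map]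
  congr 1
  · refine List.filter_congr fun i hi => ?_
    rw [List.getD_append _ _ _ _ (List.mem_range.mp hi)]
  · simp only [Function.comp_def, add_comm u.length]
    congr 1
    refine List.filter_congr fun i _ => ?_
    rw [List.getD_append_right _ _ _ _ (by omega), Nat.add_sub_cancel]

lemma nzPos_replicate_zero (c : ℕ) : nzPos (List.replicate c 0) = [] := by
  simp +contextual [nzPos, List.getD_eq_getElem?_getD, List.getElem?_replicate]

lemma nzPos_replicate_append (c : ℕ) (w : List ℕ) :
    nzPos (List.replicate c 0 ++ w) = (nzPos w).map (· + c) := by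
  rw [nzPos_append, nzPos_replicate_zero, List.length_replicate, List.nil_append]

lemma nzPos_cons_of_ne_zero {a : ℕ} (ha : a ≠ 0) (w : List ℕ) :
    nzPos (a :: w) = 0 :: (nzPos w).map (· + 1) := by
  rw [← List.singleton_append, nzPos_append]
  simp [nzPos, ha]

lemma getD_replicate_append_add (c : ℕ) (w : List ℕ) (i : ℕ) :
    (List.replicate c 0 ++ w).getD (i + c) 0 = w.getD i 0 := by
  rw [List.getD_append_right _ _ _ _ (by simp), List.length_replicate, Nat.add_sub_cancel]

lemma exists_eq_replicate_append_cons {w : List ℕ} (h : ∃ x ∈ w, x ≠ 0) :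
    ∃ c a v, a ≠ 0 ∧ w = List.replicate c 0 ++ a :: v := by
  induction w with
  | nil => simp at h
  | cons b w ih =>
    by_cases hb : b = 0
    · subst hb
      obtain ⟨c, a, v, ha, rfl⟩ := ih (by simpa using h)
      exact ⟨c + 1, a, v, ha, rfl⟩
    · exact ⟨0, b, w, hb, rfl⟩

/-- Structurally recursive form of `pairsOf` (see `pairsOf_eq_gapPairs`); the gap after the last
position of `P` is measured up to `e`. -/
def gapPairs (f : ℕ → ℕ) : List ℕ → ℕ → List (ℕ × ℕ)
  | [], _ => []
  | p :: P, e => (f p, P.headD e - p) :: gapPairs f P e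

lemma gapPairs_eq_map_range (f : ℕ → ℕ) (P : List ℕ) (e : ℕ) :
    gapPairs f P e = (List.range P.length).map fun j =>
      (f (P.getD j 0), if j + 1 = P.length then e - P.getD j 0
        else P.getD (j + 1) 0 - P.getD j 0) := by
  induction P with
  | nil => rfl
  | cons p P ih =>
    rw [gapPairs, ih, List.length_cons, List.range_succ_eq_map, List.map_cons, List.map_map]
    congr 1
    · cases P <;> simp
    · simp [Function.comp_def]

lemma pairsOf_eq_gapPairs (w : List ℕ) :
    pairsOf w = gapPairs (w.getD · 0) (nzPos w) ((nzPos w).getD 0 0 + w.length) := by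
  rw [gapPairs_eq_map_range]
  rfl

lemma gapPairs_map_add (f : ℕ → ℕ) (P : List ℕ) (e k : ℕ) :
    gapPairs f (P.map (· + k)) (e + k) = gapPairs (fun p => f (p + k)) P e := by
  induction P with
  | nil => rfl
  | cons p P ih =>
    rw [List.map_cons, gapPairs, gapPairs, ih, List.headD_map, Nat.add_sub_add_right]

def ofPairs (p : List (ℕ × ℕ)) : List ℕ :=
  p.flatMap fun x => x.1 :: List.replicate (x.2 - 1) 0

lemma ofPairs_cons (a b : ℕ) (p : List (ℕ × ℕ)) :
    ofPairs ((a, b) :: p) = a :: List.replicate (b - 1) 0 ++ ofPairs p :=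
  List.flatMap_cons

theorem List.IsRotated.ofPairs {p q : List (ℕ × ℕ)} (h : p ~r q) : ofPairs p ~r ofPairs q := by
  obtain ⟨n, rfl⟩ := h
  conv_lhs => rw [← List.take_append_drop (n % p.length) p]
  rw [List.rotate_eq_drop_append_take_mod, _root_.ofPairs, _root_.ofPairs, List.flatMap_append,
    List.flatMap_append]
  exact List.isRotated_append

lemma gapPairs_cons_replicate_append {a : ℕ} (ha : a ≠ 0) (d : ℕ) (x : List ℕ) (e : ℕ) :
    gapPairs ((a :: (List.replicate d 0 ++ x)).getD · 0)
        (nzPos (a :: (List.replicate d 0 ++ x))) (e + (d + 1)) =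
      (a, (nzPos x).headD e + (d + 1)) :: gapPairs (x.getD · 0) (nzPos x) e := by
  have hpos : nzPos (a :: (List.replicate d 0 ++ x)) = 0 :: (nzPos x).map (· + (d + 1)) := by
    rw [nzPos_cons_of_ne_zero ha, nzPos_replicate_append, List.map_map]
    simp only [Function.comp_def, add_assoc]
  have hshift : (fun p => (a :: (List.replicate d 0 ++ x)).getD (p + (d + 1)) 0) =
      (x.getD · 0) := by
    funext p
    rw [← add_assoc, List.getD_cons_succ, getD_replicate_append_add]
  rw [hpos, gapPairs, gapPairs_map_add, hshift, List.headD_map, Nat.sub_zero]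
  rfl

theorem ofPairs_gapPairs {a : ℕ} (ha : a ≠ 0) (v : List ℕ) (c : ℕ) :
    ofPairs (gapPairs ((a :: v).getD · 0) (nzPos (a :: v)) ((a :: v).length + c)) =
      a :: v ++ List.replicate c 0 := by
  induction hn : v.length using Nat.strong_induction_on generalizing a v with
  | _ n ih =>
  by_cases hv : ∃ x ∈ v, x ≠ 0
  · obtain ⟨d, b, x, hb, rfl⟩ := exists_eq_replicate_append_cons hv
    simp only [List.length_append, List.length_replicate, List.length_cons] at hn
    have hlen : (a :: (List.replicate d 0 ++ b :: x)).length + c =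
        ((b :: x).length + c) + (d + 1) := by
      simp only [List.length_cons, List.length_append, List.length_replicate]
      omega
    have hhead : (nzPos (b :: x)).headD ((b :: x).length + c) = 0 := by
      rw [nzPos_cons_of_ne_zero hb, List.headD_cons]
    rw [hlen, gapPairs_cons_replicate_append ha, hhead, ofPairs_cons,
      ih x.length (by omega) hb x rfl]
    simp
  · have hzero : v = List.replicate v.length 0 ++ [] := by
      simpa [List.eq_replicate_iff] using hv
    have hlen : (a :: (List.replicate v.length 0 ++ [])).length + c = c + (v.length + 1) := by
      simp only [List.append_nil, List.length_cons, List.length_replicate]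
      omega
    rw [hzero, hlen, gapPairs_cons_replicate_append ha]
    change ofPairs [(a, c + (v.length + 1))] = _
    rw [ofPairs_cons, ← add_assoc, Nat.add_sub_cancel, add_comm, List.replicate_add]
    simp [ofPairs]

theorem ofPairs_pairsOf_isRotated {w : List ℕ} (h : ∃ x ∈ w, x ≠ 0) :
    ofPairs (pairsOf w) ~r w := by
  obtain ⟨c, a, v, ha, rfl⟩ := exists_eq_replicate_append_cons h
  have hpairs : pairsOf (List.replicate c 0 ++ a :: v) =
      gapPairs ((a :: v).getD · 0) (nzPos (a :: v)) ((a :: v).length + c) := by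
    have hend : ((nzPos (a :: v)).map (· + c)).getD 0 0 + (List.replicate c 0 ++ a :: v).length =
        ((a :: v).length + c) + c := by
      simp only [nzPos_cons_of_ne_zero ha, List.map_cons, List.getD_cons_zero, List.length_append,
        List.length_replicate, List.length_cons]
      omega
    rw [pairsOf_eq_gapPairs, nzPos_replicate_append, hend, gapPairs_map_add]
    simp only [getD_replicate_append_add]
  rw [hpairs, ofPairs_gapPairs ha]
  exact List.isRotated_append

lemma pairsOf_eq_nil_iff {w : List ℕ} : pairsOf w = [] ↔ ∀ x ∈ w, x = 0 := by
  simp only [pairsOf, List.map_eq_nil_iff, List.range_eq_nil, List.length_eq_zero_iff]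
  constructor
  · intro h
    by_contra! hw
    obtain ⟨c, a, v, ha, rfl⟩ := exists_eq_replicate_append_cons hw
    simp [nzPos_replicate_append, nzPos_cons_of_ne_zero ha] at h
  · intro h
    rw [List.eq_replicate_iff.mpr ⟨rfl, h⟩]
    exact nzPos_replicate_zero _

theorem isRotated_of_pairsOf_isRotated {u w : List ℕ} (h : pairsOf u ~r pairsOf w)
    (hlen : u.length = w.length) : u ~r w := by
  by_cases hw : ∀ x ∈ w, x = 0
  · rw [pairsOf_eq_nil_iff.mpr hw, List.isRotated_nil_iff, pairsOf_eq_nil_iff] at h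
    have hu : u = List.replicate w.length 0 := List.eq_replicate_iff.mpr ⟨hlen, h⟩
    rw [hu, ← List.eq_replicate_iff.mpr ⟨rfl, hw⟩]
  · have hu : ¬ ∀ x ∈ u, x = 0 := by
      rw [← pairsOf_eq_nil_iff] at hw ⊢
      exact fun hu => hw (List.isRotated_nil_iff'.mp (hu ▸ h)).symm
    push Not at hu hw
    exact (ofPairs_pairsOf_isRotated hu).symm.trans
      (h.ofPairs.trans (ofPairs_pairsOf_isRotated hw))

lemma complPairs_rotate (p : List (ℕ × ℕ)) (n : ℕ) :
    complPairs (p.rotate n) = (complPairs p).rotate n := by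
  unfold complPairs
  rw [List.map_rotate, List.map_rotate, List.rotate_rotate, add_comm, ← List.rotate_rotate,
    List.zip_eq_zipWith, List.zip_eq_zipWith, List.zipWith_rotate_distrib _ _ _ _ (by simp)]

theorem List.IsRotated.complPairs {p q : List (ℕ × ℕ)} (h : p ~r q) :
    complPairs p ~r complPairs q := by
  obtain ⟨n, rfl⟩ := h
  exact ⟨n, (complPairs_rotate p n).symm⟩

lemma complPairs_complPairs (p : List (ℕ × ℕ)) :
    complPairs (complPairs p) = p.rotate 1 := by
  unfold complPairs
  have hlen : (p.map Prod.snd).length = ((p.map Prod.fst).rotate 1).length := by simp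
  rw [List.map_snd_zip hlen.ge, List.map_fst_zip hlen.le, List.zip_eq_zipWith,
    ← List.zipWith_rotate_distrib _ _ _ _ (by simp), ← List.zip_eq_zipWith, List.zip_map']
  simp

theorem complement_complement_general
    (w : List ℕ)
    (v : List ℕ) (hv : IsComplementOf w v)
    (u : List ℕ) (hu : IsComplementOf v u) :
    u ~r w := by
  obtain ⟨-, hvsum, hvpairs⟩ := hv
  obtain ⟨hulen, -, hupairs⟩ := hu
  refine isRotated_of_pairsOf_isRotated ?_ (hulen.trans hvsum)
  have hinvol : complPairs (complPairs (pairsOf w)) ~r pairsOf w := by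
    rw [complPairs_complPairs]
    exact List.IsRotated.forall _ 1
  exact hupairs.trans (hvpairs.complPairs.trans hinvol)

/-- Applying the complement operation twice returns the original cyclic class:
`(⟨w⟩ᶜ)ᶜ = ⟨w⟩`. -/
theorem complement_complement (s t : ℕ) (hs : 1 ≤ s) (ht : 1 ≤ t)
    (w : List ℕ) (hlen : w.length = s) (hsum : w.sum = t)
    (v : List ℕ) (hv : IsComplementOf w v)
    (u : List ℕ) (hu : IsComplementOf v u) :
    u ~r w :=
  complement_complement_general w v hv u hu
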